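/- arXiv:1607.02071 — 7 statements merged into one kernel-verified Lean document; each statement's English description precedes it below -/
import Mathlib

section
/- Let G be a 2-edge-connected finite graph with diameter D. For any edge e of G, the diameter of the graph G - e (obtained by deleting e) is at most 2D. -/
open SimpleGraph

/-- Distance from the start of a walk to its `i`-th vertex is at most `i`. -/
private lemma aux_dist_getVert_le {V : Type*} {H : SimpleGraph V} (hH : H.Connected)
    {x y : V} (p : H.Walk x y) (i : ℕ) : H.dist x (p.getVert i) ≤ i := by
  induction p generalizing i with
  | nil => simp [SimpleGraph.Walk.getVert, SimpleGraph.dist_self]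
  | @cons a b c h q ih =>
    cases i with
    | zero => simp
    | succ n =>
      have h1 : H.dist a b ≤ 1 := by
        simpa using SimpleGraph.dist_le (SimpleGraph.Walk.cons h SimpleGraph.Walk.nil)
      have htri := hH.dist_triangle (u := a) (v := b) (w := q.getVert n)
      have := ih n
      simp only [SimpleGraph.Walk.getVert]
      omega

/-- Distance from the `i`-th vertex of a walk to its end is at most `length - i`. -/
private lemma aux_dist_getVert_right_le {V : Type*} {H : SimpleGraph V} (hH : H.Connected)
    {x y : V} (p : H.Walk x y) (i : ℕ) : H.dist (p.getVert i) y ≤ p.length - i := by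
  induction p generalizing i with
  | nil => simp [SimpleGraph.Walk.getVert, SimpleGraph.dist_self]
  | @cons a b c h q ih =>
    cases i with
    | zero =>
      have h1 : H.dist a b ≤ 1 := by
        simpa using SimpleGraph.dist_le (SimpleGraph.Walk.cons h SimpleGraph.Walk.nil)
      have htri := hH.dist_triangle (u := a) (v := b) (w := c)
      have h2 : H.dist b c ≤ q.length := SimpleGraph.dist_le q
      simp only [SimpleGraph.Walk.getVert, SimpleGraph.Walk.length_cons]
      omega
    | succ n =>
      have := ih n
      simp only [SimpleGraph.Walk.getVert, SimpleGraph.Walk.length_cons]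
      omega

/-- Key decomposition lemma: any `G`-walk from `x` to `w` either certifies a short
distance in `G.deleteEdges {e}`, or passes through `e` in some orientation. -/
private lemma aux_walk_decomp {V : Type*} {G : SimpleGraph V} {e : Sym2 V}
    (hH : (G.deleteEdges {e}).Connected) {x w : V} (p : G.Walk x w) :
    (G.deleteEdges {e}).dist x w ≤ p.length ∨
    ∃ s t : V, s(s, t) = e ∧
      (G.deleteEdges {e}).dist x s + 1 + (G.deleteEdges {e}).dist t w ≤ p.length := by
  set H := G.deleteEdges {e} with hHdef
  induction p with
  | nil => left; simp
  | @cons a b c h q ih =>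
    by_cases hc : s(a, b) = e
    · rcases ih with hd | ⟨s, t, hst, hle⟩
      · refine Or.inr ⟨a, b, hc, ?_⟩
        have h0 : H.dist a a = 0 := SimpleGraph.dist_self
        simp only [SimpleGraph.Walk.length_cons]
        omega
      · have hab : s(s, t) = s(a, b) := by rw [hst, hc]
        rw [Sym2.eq_iff] at hab
        rcases hab with ⟨hs, ht⟩ | ⟨hs, ht⟩
        · rw [hs, ht] at hle
          refine Or.inr ⟨a, b, hc, ?_⟩
          have h0 : H.dist a a = 0 := SimpleGraph.dist_self
          simp only [SimpleGraph.Walk.length_cons]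
          omega
        · rw [hs, ht] at hle
          have h0 : H.dist b b = 0 := SimpleGraph.dist_self
          rw [h0] at hle
          refine Or.inl ?_
          simp only [SimpleGraph.Walk.length_cons]
          omega
    · have hadj : H.Adj a b := by
        rw [hHdef, SimpleGraph.deleteEdges_adj]
        exact ⟨h, by simpa using hc⟩
      have h1 : H.dist a b ≤ 1 := by
        simpa using SimpleGraph.dist_le (SimpleGraph.Walk.cons hadj SimpleGraph.Walk.nil)
      rcases ih with hd | ⟨s, t, hst, hle⟩
      · left
        have htri := hH.dist_triangle (u := a) (v := b) (w := c)
        simp only [SimpleGraph.Walk.length_cons]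
        omega
      · right
        refine ⟨s, t, hst, ?_⟩
        have htri := hH.dist_triangle (u := a) (v := b) (w := s)
        simp only [SimpleGraph.Walk.length_cons]
        omega

/-- In a 2-edge-connected finite graph `G` of diameter `D`, deleting any single edge
yields a graph of diameter at most `2 * D`. -/
theorem diam_deleteEdge_le_two_mul {V : Type*} [Fintype V] (G : SimpleGraph V)
    (hconn : G.Connected)
    (h2ec : ∀ e ∈ G.edgeSet, (G.deleteEdges {e}).Connected)
    (e : Sym2 V) (he : e ∈ G.edgeSet) :
    (G.deleteEdges {e}).diam ≤ 2 * G.diam := by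
  set H := G.deleteEdges {e} with hHdef
  have hH : H.Connected := h2ec e he
  have hne : Nonempty V := by
    induction e using Sym2.ind with
    | _ a b => exact ⟨a⟩
  have hGtop : G.ediam ≠ ⊤ := by
    obtain ⟨a, b, hab⟩ := G.exists_edist_eq_ediam_of_finite
    rw [← hab]
    exact SimpleGraph.edist_ne_top_iff_reachable.mpr (hconn.preconnected a b)
  set D := G.diam with hD
  have hGd : ∀ a b : V, G.dist a b ≤ D := fun a b => SimpleGraph.dist_le_diam hGtop
  -- key claim
  have key : ∀ x y : V, H.dist x y ≤ 2 * D := by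
    intro x y
    by_contra hcon
    push_neg at hcon
    obtain ⟨p, hp⟩ := hH.exists_walk_length_eq_dist x y
    set L := H.dist x y with hL
    set w := p.getVert (D + 1) with hw
    set w' := p.getVert (L - (D + 1)) with hw'
    have h1 : H.dist x w ≤ D + 1 := aux_dist_getVert_le hH p (D + 1)
    have h2 : H.dist w y ≤ p.length - (D + 1) := aux_dist_getVert_right_le hH p (D + 1)
    have h3 : H.dist x w' ≤ L - (D + 1) := aux_dist_getVert_le hH p (L - (D + 1))
    have h4 : H.dist w' y ≤ p.length - (L - (D + 1)) :=
      aux_dist_getVert_right_le hH p (L - (D + 1))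
    have htri1 : L ≤ H.dist x w + H.dist w y := hL ▸ hH.dist_triangle
    have htri2 : L ≤ H.dist x w' + H.dist w' y := hL ▸ hH.dist_triangle
    -- G-geodesic from x to w
    obtain ⟨q, hq⟩ := hconn.exists_walk_length_eq_dist x w
    have hqD : q.length ≤ D := hq ▸ hGd x w
    -- G-geodesic from y to w'
    obtain ⟨q', hq'⟩ := hconn.exists_walk_length_eq_dist y w'
    have hq'D : q'.length ≤ D := hq' ▸ hGd y w'
    rcases aux_walk_decomp (hHdef ▸ hH) q with hd | ⟨s, t, hst, hA⟩
    · -- H.dist x w ≤ D, but it must be ≥ D + 1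
      rw [← hHdef] at hd
      omega
    · rcases aux_walk_decomp (hHdef ▸ hH) q' with hd' | ⟨s', t', hst', hB⟩
      · -- H.dist y w' ≤ D, but it must be ≥ D + 1
        rw [← hHdef] at hd'
        have hcomm : H.dist w' y = H.dist y w' := SimpleGraph.dist_comm
        omega
      · rw [← hHdef] at hA hB
        have heq : s(s, t) = s(s', t') := by rw [hst, hst']
        rw [Sym2.eq_iff] at heq
        have htri3 : L ≤ H.dist x s + H.dist s y := hL ▸ hH.dist_triangle
        rcases heq with ⟨hs, ht⟩ | ⟨hs, ht⟩
        · -- same orientation : both x and y are close to s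
          subst hs; subst ht
          have hcomm : H.dist s y = H.dist y s := SimpleGraph.dist_comm
          omega
        · -- opposite orientation
          subst hs; subst ht
          -- hA : dist x s + 1 + dist t w ≤ D,  hB : dist y t + 1 + dist s w' ≤ D
          have htri4 : H.dist x w' ≤ H.dist x s + H.dist s w' := hH.dist_triangle
          have htri5 : H.dist y w ≤ H.dist y t + H.dist t w := hH.dist_triangle
          have hcomm1 : H.dist w y = H.dist y w := SimpleGraph.dist_comm
          omega
  obtain ⟨a, b, hab⟩ := H.exists_dist_eq_diam
  calc H.diam = H.dist a b := hab.symm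
    _ ≤ 2 * D := key a b
end

section
/- In a 2-edge-connected graph G with diameter D, for any edge e = {u,v} and any two vertices x,y whose shortest path in G uses e, there is a path from x to y in G - e of length at most 2D. Consequently, distances in G - e are at most 2D. -/
/-!
Let `e = s(u, v)` and suppose `d_{G-e}(x, y) > 2D`. A shortest `x`–`y` path of `G` must then cross
`e`, say from `u` to `v`, so `x` is strictly closer to `u` than to `v`. Take the vertex `m` at
distance `D + 1` from `x` on a shortest `x`–`y` path of `G - e`. Since `d_{G-e}(x, m) > D`, a
shortest `x`–`m` path of `G` crosses `e` too, and it cannot do so from `v` to `u` (that would put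
`m` within `D` of `x` in `G - e`, going through `u`). Hence `d_{G-e}(x, u) + 1 + d_{G-e}(v, m) ≤ D`,
and since `d_{G-e}(m, y) ≥ D`, this gives `d_{G-e}(x, u) < d_{G-e}(v, y)`. The same argument started
from `y` gives `d_{G-e}(y, v) < d_{G-e}(u, x)`, a contradiction.
-/

namespace SimpleGraph

variable {V : Type*} {G : SimpleGraph V} {x y u v m : V} {e : Sym2 V} {D : ℕ}

lemma Reachable.exists_dist_eq_of_le_dist (h : G.Reachable x y) {k : ℕ} (hk : k ≤ G.dist x y) :
    ∃ m, G.dist x m = k ∧ G.dist m y = G.dist x y - k := by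
  obtain ⟨p, hp⟩ := h.exists_walk_length_eq_dist
  have hx : G.dist x (p.getVert k) ≤ k := (dist_le (p.take k)).trans (by simp)
  have hy : G.dist (p.getVert k) y ≤ G.dist x y - k := (dist_le (p.drop k)).trans (by simp [hp])
  have := (p.take k).reachable.dist_triangle_left y
  exact ⟨p.getVert k, by omega, by omega⟩

lemma Walk.IsTrail.dist_deleteEdges_add_le {ru : G.Walk x u} {rv : G.Walk v y} (h : G.Adj u v)
    (hp : ((ru.append h.toWalk).append rv).IsTrail) :
    (G.deleteEdges {s(u, v)}).dist x u + 1 + (G.deleteEdges {s(u, v)}).dist v y ≤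
      ru.length + 1 + rv.length := by
  have hnd := hp.edges_nodup
  simp only [Walk.edges_append, Adj.toWalk, Walk.edges_cons, Walk.edges_nil, List.append_assoc,
    List.cons_append, List.nil_append, List.nodup_middle, List.nodup_cons, List.mem_append,
    not_or] at hnd
  obtain ⟨⟨hru, hrv⟩, -⟩ := hnd
  have hx := dist_le (ru.toDeleteEdge _ hru)
  have hy := dist_le (rv.toDeleteEdge _ hrv)
  simp only [Walk.length_transfer] at hx hy
  omega

lemma Walk.IsTrail.exists_dist_deleteEdges_add_le {p : G.Walk x y} (hp : p.IsTrail)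
    (he : e ∈ p.edges) :
    ∃ u v, s(u, v) = e ∧
      (G.deleteEdges {e}).dist x u + 1 + (G.deleteEdges {e}).dist v y ≤ p.length := by
  induction e using Sym2.ind with | _ a b => ?_
  have hab := p.adj_of_mem_edges he
  rcases (Walk.isSubwalk_toWalk_iff_mem_edges hab).mpr he with ⟨ru, rv, hsplit⟩ | ⟨ru, rv, hsplit⟩
  · refine ⟨a, b, rfl, ?_⟩
    rw [hsplit] at hp ⊢
    simpa using hp.dist_deleteEdges_add_le
  · refine ⟨b, a, Sym2.eq_swap, ?_⟩
    rw [hsplit] at hp ⊢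
    rw [Sym2.eq_swap]
    simpa using hp.dist_deleteEdges_add_le

lemma Connected.dist_deleteEdges_le_or_exists (hG : G.Connected) (e : Sym2 V) (x y : V) :
    (G.deleteEdges {e}).dist x y ≤ G.dist x y ∨
      ∃ u v, s(u, v) = e ∧
        (G.deleteEdges {e}).dist x u + 1 + (G.deleteEdges {e}).dist v y ≤ G.dist x y := by
  obtain ⟨p, hp, hlen⟩ := hG.exists_path_of_dist x y
  by_cases he : e ∈ p.edges
  · exact .inr (hlen ▸ hp.isTrail.exists_dist_deleteEdges_add_le he)
  · exact .inl (hlen ▸ (dist_le (p.toDeleteEdge e he)).trans_eq (by simp))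

lemma dist_deleteEdges_add_le_of_lt (hG' : (G.deleteEdges {e}).Connected)
    (hdiam : ∀ x y, G.dist x y ≤ D) (he : s(u, v) = e)
    (hxu : (G.deleteEdges {e}).dist x u < G.dist x v) (hm : D < (G.deleteEdges {e}).dist x m) :
    (G.deleteEdges {e}).dist x u + 1 + (G.deleteEdges {e}).dist v m ≤ D := by
  have hxm := hdiam x m
  rcases (hG'.mono (G.deleteEdges_le _)).dist_deleteEdges_le_or_exists e x m with
    h | ⟨w, w', hw, h⟩
  · omega
  rcases Sym2.eq_iff.mp (hw.trans he.symm) with ⟨hwu, hwv⟩ | ⟨hwv, hwu⟩ <;> subst w w'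
  · omega
  · have := hG'.dist_triangle (u := x) (v := u) (w := m)
    have := (hG'.preconnected x v).dist_anti (G.deleteEdges_le _)
    omega

lemma dist_deleteEdges_lt_dist_of_add_le (hG' : (G.deleteEdges {e}).Connected)
    (hsplit : (G.deleteEdges {e}).dist x u + 1 + (G.deleteEdges {e}).dist v y ≤ G.dist x y) :
    (G.deleteEdges {e}).dist x u < G.dist x v := by
  have := (hG'.mono (G.deleteEdges_le _)).dist_triangle (u := x) (v := v) (w := y)
  have := (hG'.preconnected v y).dist_anti (G.deleteEdges_le _)
  omega

lemma dist_deleteEdges_add_one_le_of_add_le (hG' : (G.deleteEdges {e}).Connected)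
    (hdiam : ∀ x y, G.dist x y ≤ D) (he : s(u, v) = e)
    (hsplit : (G.deleteEdges {e}).dist x u + 1 + (G.deleteEdges {e}).dist v y ≤ G.dist x y)
    (hL : 2 * D < (G.deleteEdges {e}).dist x y) :
    (G.deleteEdges {e}).dist x u + 1 ≤ (G.deleteEdges {e}).dist v y := by
  obtain ⟨m, hxm, hmy⟩ := (hG'.preconnected x y).exists_dist_eq_of_le_dist (k := D + 1) (by omega)
  have := dist_deleteEdges_add_le_of_lt hG' hdiam he
    (dist_deleteEdges_lt_dist_of_add_le hG' hsplit) (m := m) (by omega)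
  have := hG'.dist_triangle (u := m) (v := v) (w := y)
  have := (G.deleteEdges {e}).dist_comm (u := m) (v := v)
  omega

theorem dist_deleteEdges_le_two_mul (hG' : (G.deleteEdges {e}).Connected)
    (hdiam : ∀ x y, G.dist x y ≤ D) (x y : V) : (G.deleteEdges {e}).dist x y ≤ 2 * D := by
  rcases (hG'.mono (G.deleteEdges_le _)).dist_deleteEdges_le_or_exists e x y with
    h | ⟨u, v, he, hsplit⟩
  · have := hdiam x y
    omega
  by_contra! hL
  have hcomm (a b : V) := (G.deleteEdges {e}).dist_comm (u := a) (v := b)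
  have hsplit' : (G.deleteEdges {e}).dist y v + 1 + (G.deleteEdges {e}).dist u x ≤ G.dist y x := by
    rw [hcomm y v, hcomm u x, G.dist_comm]
    omega
  have hxy := dist_deleteEdges_add_one_le_of_add_le hG' hdiam he hsplit hL
  have hyx := dist_deleteEdges_add_one_le_of_add_le hG' hdiam (Sym2.eq_swap.trans he) hsplit'
    (hcomm x y ▸ hL)
  rw [hcomm y v, hcomm u x] at hyx
  omega

end SimpleGraph

theorem exists_short_path_in_deleteEdge_general {V : Type*} (G : SimpleGraph V)
    (D : ℕ) (hdiam : ∀ x y : V, G.dist x y ≤ D)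
    (h2ec : ∀ e ∈ G.edgeSet, (G.deleteEdges {e}).Connected)
    (e : Sym2 V) (he : e ∈ G.edgeSet) :
    (∀ x y : V, ∀ p : G.Walk x y, p.IsPath → p.length = G.dist x y → e ∈ p.edges →
      ∃ q : (G.deleteEdges {e}).Walk x y, q.IsPath ∧ q.length ≤ 2 * D) ∧
    (∀ x y : V, (G.deleteEdges {e}).dist x y ≤ 2 * D) := by
  have hG' := h2ec e he
  have hdist := SimpleGraph.dist_deleteEdges_le_two_mul hG' hdiam
  refine ⟨fun x y _ _ _ _ => ?_, hdist⟩
  obtain ⟨q, hq, hlen⟩ := hG'.exists_path_of_dist x y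
  exact ⟨q, hq, hlen ▸ hdist x y⟩

/-- In a 2-edge-connected finite graph `G` of diameter `D`: for any edge `e` and any two
vertices `x`, `y` such that some shortest `x`–`y` path in `G` uses `e`, there is a path from
`x` to `y` in `G - e` of length at most `2 * D`; consequently all distances in `G - e` are
at most `2 * D`. -/
theorem exists_short_path_in_deleteEdge {V : Type*} [Fintype V] (G : SimpleGraph V)
    (D : ℕ) (hconn : G.Connected) (hdiam : ∀ x y : V, G.dist x y ≤ D)
    (h2ec : ∀ e ∈ G.edgeSet, (G.deleteEdges {e}).Connected)
    (e : Sym2 V) (he : e ∈ G.edgeSet) :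
    (∀ x y : V, ∀ p : G.Walk x y, p.IsPath → p.length = G.dist x y → e ∈ p.edges →
      ∃ q : (G.deleteEdges {e}).Walk x y, q.IsPath ∧ q.length ≤ 2 * D) ∧
    (∀ x y : V, (G.deleteEdges {e}).dist x y ≤ 2 * D) :=
  exists_short_path_in_deleteEdge_general G D hdiam h2ec e he
end

section
/- Any 2-edge-connected multigraph G on n vertices has at most 2(n-1) edges that are 2-cut-edges, where an edge e is a 2-cut-edge if there exists another edge f such that removing both e and f disconnects G. -/
open scoped BigOperators ENNReal

/-- A walk of length `n` between two vertices under step relation `r`. -/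
def walkLen {V : Type*} (r : V → V → Prop) : ℕ → V → V → Prop
  | 0, u, v => u = v
  | (n+1), u, v => ∃ w, r u w ∧ walkLen r n w v

/-- Adjacency in a multigraph given by a multiset of (undirected) edges. -/
def mAdj {V : Type*} (m : Multiset (Sym2 V)) (u v : V) : Prop := s(u, v) ∈ m

/-- Connectivity of a multigraph given by a multiset of edges. -/
def mConnected {V : Type*} (m : Multiset (Sym2 V)) : Prop :=
  ∀ u v : V, ∃ n : ℕ, walkLen (mAdj m) n u v

/-- A multigraph is 2-edge-connected if it is connected and remains connected after
the removal of any single edge. -/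
def TwoEdgeConnected {V : Type*} [DecidableEq V] (m : Multiset (Sym2 V)) : Prop :=
  mConnected m ∧ ∀ e ∈ m, mConnected (m.erase e)

/-- An edge `e` is a 2-cut-edge if together with some other edge `f` its removal
disconnects the multigraph. -/
def IsTwoCutEdge {V : Type*} [DecidableEq V] (m : Multiset (Sym2 V)) (e : Sym2 V) : Prop :=
  e ∈ m ∧ ∃ f ∈ m.erase e, ¬ mConnected ((m.erase e).erase f)

open Classical in
/-- The number of 2-cut-edges (counted with multiplicity). -/
noncomputable def twoCutCount {V : Type*} [DecidableEq V] (m : Multiset (Sym2 V)) : ℕ :=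
  Multiset.card (m.filter (fun e => IsTwoCutEdge m e))

namespace TwoCut

variable {V : Type*}

lemma walkLen_trans {r : V → V → Prop} {a b : ℕ} {u v w : V}
    (h1 : walkLen r a u v) (h2 : walkLen r b v w) : walkLen r (a + b) u w := by
  induction a generalizing u with
  | zero => cases h1; simpa [Nat.zero_add] using h2
  | succ n ih =>
    obtain ⟨x, hx, hw⟩ := h1
    rw [Nat.succ_add]
    exact ⟨x, hx, ih hw⟩

lemma mAdj_symm {m : Multiset (Sym2 V)} {u v : V} (h : mAdj m u v) : mAdj m v u := by
  unfold mAdj at *; rwa [Sym2.eq_swap]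

lemma walkLen_symm {m : Multiset (Sym2 V)} {a : ℕ} {u v : V}
    (h : walkLen (mAdj m) a u v) : ∃ b, walkLen (mAdj m) b v u := by
  induction a generalizing u with
  | zero => cases h; exact ⟨0, rfl⟩
  | succ n ih =>
    obtain ⟨x, hx, hw⟩ := h
    obtain ⟨b, hb⟩ := ih hw
    exact ⟨b + 1, walkLen_trans hb (⟨u, mAdj_symm hx, rfl⟩ : walkLen (mAdj m) 1 x u)⟩

lemma walkLen_mono {m m' : Multiset (Sym2 V)} (hmm : ∀ e ∈ m, e ∈ m') {a : ℕ} {u v : V}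
    (h : walkLen (mAdj m) a u v) : walkLen (mAdj m') a u v := by
  induction a generalizing u with
  | zero => exact h
  | succ n ih =>
    obtain ⟨x, hx, hw⟩ := h
    exact ⟨x, hmm _ hx, ih hw⟩

/-- `e` crosses the cut given by `A`. -/
def crossP (A : Finset V) (e : Sym2 V) : Prop := ∃ u v, e = s(u, v) ∧ u ∈ A ∧ v ∉ A

open Classical in
/-- The multiset of crossing edges of a cut. -/
noncomputable def cross (m : Multiset (Sym2 V)) (A : Finset V) : Multiset (Sym2 V) :=
  m.filter (crossP A)

open Classical in
lemma mem_cross {m : Multiset (Sym2 V)} {A : Finset V} {e : Sym2 V} :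
    e ∈ cross m A ↔ e ∈ m ∧ crossP A e := by
  simp [cross, Multiset.mem_filter]

open Classical in
lemma count_cross [DecidableEq (Sym2 V)] {m : Multiset (Sym2 V)} {A : Finset V} {e : Sym2 V}
    (h : crossP A e) : (cross m A).count e = m.count e := by
  classical
  rw [cross, Multiset.count_filter]
  simp [h]

/-- A walk from inside `A` to outside `A` must use a crossing edge. -/
lemma exists_cross_of_walk {m : Multiset (Sym2 V)} {A : Finset V} {a : ℕ} {u v : V}
    (h : walkLen (mAdj m) a u v) (hu : u ∈ A) (hv : v ∉ A) :
    ∃ e ∈ m, crossP A e := by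
  induction a generalizing u with
  | zero => cases h; exact absurd hu hv
  | succ n ih =>
    obtain ⟨x, hx, hw⟩ := h
    by_cases hxA : x ∈ A
    · exact ih hw hxA
    · exact ⟨s(u, x), hx, u, x, rfl, hu, hxA⟩

/-- A disconnected multigraph has an empty cut separating two vertices. -/
lemma exists_cut_of_not_connected [Fintype V] {m : Multiset (Sym2 V)}
    (h : ¬ mConnected m) :
    ∃ (A : Finset V) (u v : V), u ∈ A ∧ v ∉ A ∧ ∀ e ∈ m, ¬ crossP A e := by
  classical
  rw [mConnected] at h
  push_neg at h
  obtain ⟨u, v, huv⟩ := h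
  refine ⟨Finset.univ.filter (fun x => ∃ k, walkLen (mAdj m) k u x), u, v, ?_, ?_, ?_⟩
  · simp only [Finset.mem_filter, Finset.mem_univ, true_and]
    exact ⟨0, rfl⟩
  · simp only [Finset.mem_filter, Finset.mem_univ, true_and]
    exact fun ⟨k, hk⟩ => huv k hk
  · rintro e he ⟨a, b, rfl, ha, hb⟩
    simp only [Finset.mem_filter, Finset.mem_univ, true_and] at ha hb
    obtain ⟨k, hk⟩ := ha
    exact hb ⟨k + 1, walkLen_trans hk (⟨b, he, rfl⟩ : walkLen (mAdj m) 1 a b)⟩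

/-- Structure of a 2-edge-cut in a 2-edge-connected multigraph: there is a vertex cut
crossed by exactly (one copy each of) `e` and `f`. -/
lemma cut_pair [Fintype V] [DecidableEq V] {m : Multiset (Sym2 V)}
    (h2ec : TwoEdgeConnected m) {e f : Sym2 V} (he : e ∈ m) (hf : f ∈ m.erase e)
    (hd : ¬ mConnected ((m.erase e).erase f)) :
    ∃ A : Finset V, cross m A = e ::ₘ {f} := by
  classical
  set m₂ := (m.erase e).erase f with hm₂
  obtain ⟨A, u, v, hu, hv, hno⟩ := exists_cut_of_not_connected hd
  have hm : m = e ::ₘ f ::ₘ m₂ := by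
    rw [hm₂, Multiset.cons_erase hf, Multiset.cons_erase he]
  have hfm : f ∈ m := Multiset.mem_of_mem_erase hf
  have hce : crossP A e := by
    by_contra hce
    have hex : ∃ g ∈ m, crossP A g := by
      obtain ⟨k, hk⟩ := h2ec.1 u v
      exact exists_cross_of_walk hk hu hv
    obtain ⟨g, hgm, hgc⟩ := hex
    have hgf : g = f := by
      rw [hm] at hgm
      rcases Multiset.mem_cons.mp hgm with rfl | hg
      · exact absurd hgc hce
      rcases Multiset.mem_cons.mp hg with rfl | hg
      · rfl
      · exact absurd hgc (hno _ hg)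
    subst hgf
    have herase : m.erase g = e ::ₘ m₂ := by
      rw [hm, Multiset.cons_swap, Multiset.erase_cons_head]
    obtain ⟨k, hk⟩ := h2ec.2 g hfm u v
    obtain ⟨g', hg'm, hg'c⟩ := exists_cross_of_walk hk hu hv
    rw [herase] at hg'm
    rcases Multiset.mem_cons.mp hg'm with rfl | hg'
    · exact hce hg'c
    · exact hno _ hg' hg'c
  have hcf : crossP A f := by
    by_contra hcf
    have herase : m.erase e = f ::ₘ m₂ := by rw [hm, Multiset.erase_cons_head]
    obtain ⟨k, hk⟩ := h2ec.2 e he u v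
    obtain ⟨g', hg'm, hg'c⟩ := exists_cross_of_walk hk hu hv
    rw [herase] at hg'm
    rcases Multiset.mem_cons.mp hg'm with rfl | hg'
    · exact hcf hg'c
    · exact hno _ hg' hg'c
  refine ⟨A, ?_⟩
  rw [cross, hm, Multiset.filter_cons_of_pos _ hce, Multiset.filter_cons_of_pos _ hcf,
    Multiset.filter_eq_nil.mpr hno]
  rfl

lemma spanning_aux [Fintype V] [DecidableEq V] {m : Multiset (Sym2 V)}
    (hc : mConnected m) (v₀ : V) :
    ∀ (j : ℕ) (S : Finset V) (T : Finset (Sym2 V)),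
      Fintype.card V - S.card ≤ j → v₀ ∈ S →
      (∀ t ∈ T, t ∈ m) → T.card + 1 ≤ S.card →
      (∀ x ∈ S, ∃ k, walkLen (mAdj T.val) k v₀ x) →
      ∃ T' : Finset (Sym2 V), (∀ t ∈ T', t ∈ m) ∧ T'.card + 1 ≤ Fintype.card V ∧
        (∀ x : V, ∃ k, walkLen (mAdj T'.val) k v₀ x) := by
  intro j
  induction j with
  | zero =>
    intro S T hj hv₀ hTm hcard hreach
    have hS : S = Finset.univ := by
      apply Finset.eq_univ_of_card
      have := Finset.card_le_univ S
      omega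
    refine ⟨T, hTm, ?_, fun x => hreach x (hS ▸ Finset.mem_univ x)⟩
    calc T.card + 1 ≤ S.card := hcard
      _ ≤ Fintype.card V := Finset.card_le_univ S
  | succ j ih =>
    intro S T hj hv₀ hTm hcard hreach
    by_cases hS : S = Finset.univ
    · refine ⟨T, hTm, ?_, fun x => hreach x (hS ▸ Finset.mem_univ x)⟩
      calc T.card + 1 ≤ S.card := hcard
        _ ≤ Fintype.card V := Finset.card_le_univ S
    · obtain ⟨v, hv⟩ : ∃ v, v ∉ S := by
        by_contra h
        push_neg at h
        exact hS (Finset.eq_univ_iff_forall.mpr h)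
      have hex : ∃ g ∈ m, crossP S g := by
        obtain ⟨k, hk⟩ := hc v₀ v
        exact exists_cross_of_walk hk hv₀ hv
      obtain ⟨g, hgm, a, b, rfl, haS, hbS⟩ := hex
      have hsub' : ∀ t ∈ T.val, t ∈ (insert s(a,b) T).val :=
        fun t ht => Finset.mem_insert_of_mem ht
      refine ih (insert b S) (insert s(a,b) T) ?_ (Finset.mem_insert_of_mem hv₀) ?_ ?_ ?_
      · rw [Finset.card_insert_of_notMem hbS]; omega
      · intro t ht
        rcases Finset.mem_insert.mp ht with rfl | ht
        · exact hgm
        · exact hTm _ ht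
      · rw [Finset.card_insert_of_notMem hbS]
        calc (insert s(a,b) T).card + 1 ≤ T.card + 1 + 1 := by
              have := Finset.card_insert_le s(a,b) T; omega
          _ ≤ S.card + 1 := by omega
      · intro x hx
        rcases Finset.mem_insert.mp hx with rfl | hx
        · obtain ⟨k, hk⟩ := hreach a haS
          refine ⟨k + 1, walkLen_trans (walkLen_mono hsub' hk)
            (⟨x, ?_, rfl⟩ : walkLen (mAdj (insert s(a,x) T).val) 1 a x)⟩
          exact Finset.mem_insert_self _ _
        · obtain ⟨k, hk⟩ := hreach x hx
          exact ⟨k, walkLen_mono hsub' hk⟩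

/-- Existence of a spanning connected edge set of size at most `|V| - 1`. -/
lemma exists_spanning [Fintype V] [DecidableEq V] {m : Multiset (Sym2 V)}
    (hc : mConnected m) (v₀ : V) :
    ∃ T : Finset (Sym2 V), (∀ t ∈ T, t ∈ m) ∧ T.card + 1 ≤ Fintype.card V ∧
      (∀ x : V, ∃ k, walkLen (mAdj T.val) k v₀ x) := by
  refine spanning_aux hc v₀ (Fintype.card V) {v₀} ∅ ?_ (Finset.mem_singleton_self v₀) ?_ ?_ ?_
  · omega
  · simp
  · simp
  · intro x hx
    rw [Finset.mem_singleton] at hx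
    exact ⟨0, hx.symm⟩

lemma crossP_compl [Fintype V] [DecidableEq V] {A : Finset V} {e : Sym2 V} :
    crossP Aᶜ e ↔ crossP A e := by
  constructor
  · rintro ⟨u, v, rfl, hu, hv⟩
    simp only [Finset.mem_compl, not_not] at hu hv
    exact ⟨v, u, Sym2.eq_swap, hv, hu⟩
  · rintro ⟨u, v, rfl, hu, hv⟩
    exact ⟨v, u, Sym2.eq_swap, by simpa using hv, by simpa using hu⟩

open Classical in
lemma cross_compl [Fintype V] [DecidableEq V] {m : Multiset (Sym2 V)} {A : Finset V} :
    cross m Aᶜ = cross m A := by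
  rw [cross, cross]
  exact Multiset.filter_congr (fun e _ => by rw [crossP_compl])

open Classical in
/-- The reachable set from vertex `a` in the graph `T` with edge `t` removed. -/
noncomputable def fcut [Fintype V] [DecidableEq V] (T : Finset (Sym2 V)) (t : Sym2 V)
    (a : V) : Finset V :=
  Finset.univ.filter (fun x => ∃ k, walkLen (mAdj (T.erase t).val) k a x)

lemma mem_fcut_self [Fintype V] [DecidableEq V] {T : Finset (Sym2 V)} {t : Sym2 V} {a : V} :
    a ∈ fcut T t a := by
  classical
  simp only [fcut, Finset.mem_filter, Finset.mem_univ, true_and]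
  exact ⟨0, rfl⟩

lemma fcut_adj [Fintype V] [DecidableEq V] {T : Finset (Sym2 V)} {t : Sym2 V} {a y w : V}
    (hy : y ∈ fcut T t a) (hyw : s(y, w) ∈ T) (hne : s(y, w) ≠ t) : w ∈ fcut T t a := by
  classical
  simp only [fcut, Finset.mem_filter, Finset.mem_univ, true_and] at hy ⊢
  obtain ⟨k, hk⟩ := hy
  refine ⟨k + 1, walkLen_trans hk (⟨w, ?_, rfl⟩ : walkLen (mAdj (T.erase t).val) 1 y w)⟩
  exact Finset.mem_erase.mpr ⟨hne, hyw⟩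

lemma fcut_subset [Fintype V] [DecidableEq V] {T : Finset (Sym2 V)} {t : Sym2 V}
    {A : Finset V} {a : V} (haA : a ∈ A)
    (hA : ∀ s ∈ T, crossP A s → s = t) : fcut T t a ⊆ A := by
  classical
  intro x hx
  simp only [fcut, Finset.mem_filter, Finset.mem_univ, true_and] at hx
  obtain ⟨k, hk⟩ := hx
  by_contra hxA
  obtain ⟨g, hgm, hgc⟩ := exists_cross_of_walk hk haA hxA
  have hgT := Finset.mem_erase.mp hgm
  exact hgT.1 (hA g hgT.2 hgc)

lemma fcut_cover [Fintype V] [DecidableEq V] {T : Finset (Sym2 V)} {t : Sym2 V}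
    {a b : V} (v₀ : V) (hspan : ∀ x : V, ∃ k, walkLen (mAdj T.val) k v₀ x)
    (ht : t = s(a, b)) : ∀ x : V, x ∈ fcut T t a ∨ x ∈ fcut T t b := by
  classical
  have key : ∀ (k : ℕ) (y z : V), walkLen (mAdj T.val) k y z →
      (y ∈ fcut T t a ∨ y ∈ fcut T t b) → (z ∈ fcut T t a ∨ z ∈ fcut T t b) := by
    intro k
    induction k with
    | zero => rintro y z rfl h; exact h
    | succ n ih =>
      rintro y z ⟨w, hyw, hwz⟩ hy
      refine ih w z hwz ?_
      by_cases hne : s(y, w) = t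
      · rw [ht] at hne
        rcases Sym2.eq_iff.mp hne with ⟨rfl, rfl⟩ | ⟨rfl, rfl⟩
        · exact Or.inr mem_fcut_self
        · exact Or.inl mem_fcut_self
      · rcases hy with hy | hy
        · exact Or.inl (fcut_adj hy hyw hne)
        · exact Or.inr (fcut_adj hy hyw hne)
  intro x
  obtain ⟨k₁, hk₁⟩ := hspan a
  obtain ⟨k₂, hk₂⟩ := walkLen_symm hk₁
  obtain ⟨k₃, hk₃⟩ := hspan x
  exact key _ a x (walkLen_trans hk₂ hk₃) (Or.inl mem_fcut_self)

lemma cut_eq_fcut [Fintype V] [DecidableEq V] {T : Finset (Sym2 V)} {t : Sym2 V}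
    {A : Finset V} {a b : V} (v₀ : V) (hspan : ∀ x : V, ∃ k, walkLen (mAdj T.val) k v₀ x)
    (ht : t = s(a, b)) (haA : a ∈ A) (hbA : b ∉ A)
    (hA : ∀ s ∈ T, crossP A s → s = t) : A = fcut T t a := by
  classical
  apply Finset.Subset.antisymm
  · intro x hx
    rcases fcut_cover v₀ hspan ht x with h | h
    · exact h
    · have hsub : fcut T t b ⊆ Aᶜ := by
        refine fcut_subset (Finset.mem_compl.mpr hbA) ?_
        intro s hs hcs
        exact hA s hs (crossP_compl.mp hcs)
      exact absurd (Finset.mem_compl.mp (hsub h)) (not_not.mpr hx)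
  · exact fcut_subset haA hA

/-- Cut uniqueness: two cuts crossed (within `T`) only by `t` give the same crossing sets. -/
lemma cut_unique [Fintype V] [DecidableEq V] {T : Finset (Sym2 V)} {t : Sym2 V}
    {A A' : Finset V} (v₀ : V) (hspan : ∀ x : V, ∃ k, walkLen (mAdj T.val) k v₀ x)
    (hA : ∀ s ∈ T, crossP A s → s = t) (hA' : ∀ s ∈ T, crossP A' s → s = t)
    (hAt : crossP A t) (hA't : crossP A' t) (m : Multiset (Sym2 V)) :
    cross m A' = cross m A := by
  classical
  obtain ⟨a, b, ht, haA, hbA⟩ := hAt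
  obtain ⟨a', b', ht', haA', hbA'⟩ := hA't
  have hE : s(a, b) = s(a', b') := ht ▸ ht'
  have h1 : A = fcut T t a := cut_eq_fcut v₀ hspan ht haA hbA hA
  rcases Sym2.eq_iff.mp hE with ⟨rfl, rfl⟩ | ⟨h1', h2'⟩
  · rw [cut_eq_fcut v₀ hspan ht haA' hbA' hA', h1]
  · subst h1'; subst h2'
    have h2 : A'ᶜ = fcut T t a := by
      refine cut_eq_fcut v₀ hspan ht (Finset.mem_compl.mpr hbA') (by simpa using haA') ?_
      intro s hs hcs
      exact hA' s hs (crossP_compl.mp hcs)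
    have hAc : A' = Aᶜ := by
      rw [← compl_compl A', h2, h1]
    rw [hAc, cross_compl]

end TwoCut

open TwoCut in
theorem twoCutCount_aux {V : Type*} [DecidableEq V] [Fintype V]
    (m : Multiset (Sym2 V)) (h2ec : TwoEdgeConnected m)
    (inst : DecidablePred (fun e => IsTwoCutEdge m e)) :
    Multiset.card (@Multiset.filter _ (fun e => IsTwoCutEdge m e) inst m)
      ≤ 2 * (Fintype.card V - 1) := by
  classical
  by_cases hV : Nonempty V
  swap
  · -- no vertices: no edges at all
    have : m = 0 := by
      rcases Multiset.empty_or_exists_mem m with h | ⟨e, he⟩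
      · exact h
      · induction e using Sym2.ind with
        | _ x y => exact absurd ⟨x⟩ hV
    subst this
    simp
  obtain ⟨v₀⟩ := hV
  set M := @Multiset.filter _ (fun e => IsTwoCutEdge m e) inst m with hM
  set S := M.toFinset with hS
  have hPS : ∀ e ∈ S, IsTwoCutEdge m e := by
    intro e he
    rw [hS, Multiset.mem_toFinset, hM, Multiset.mem_filter] at he
    exact he.2
  -- choose a cut for each 2-cut-edge
  have h1 : ∀ e : Sym2 V, ∃ (A : Finset V) (f : Sym2 V),
      IsTwoCutEdge m e → cross m A = e ::ₘ {f} := by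
    intro e
    by_cases hP : IsTwoCutEdge m e
    · obtain ⟨he, f, hf, hd⟩ := hP
      obtain ⟨A, hA⟩ := cut_pair h2ec he hf hd
      exact ⟨A, f, fun _ => hA⟩
    · exact ⟨∅, e, fun h => absurd h hP⟩
  choose A f hAf using h1
  -- get a spanning tree
  obtain ⟨T, hTm, hTcard, hspan⟩ := exists_spanning h2ec.1 v₀
  -- basic facts about chosen cuts
  have hcrossE : ∀ e ∈ S, crossP (A e) e := by
    intro e he
    have := hAf e (hPS e he)
    have hmem : e ∈ cross m (A e) := by rw [this]; exact Multiset.mem_cons_self _ _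
    exact (mem_cross.mp hmem).2
  have hcrossF : ∀ e ∈ S, crossP (A e) (f e) := by
    intro e he
    have := hAf e (hPS e he)
    have hmem : f e ∈ cross m (A e) := by
      rw [this]; exact Multiset.mem_cons_of_mem (Multiset.mem_singleton_self _)
    exact (mem_cross.mp hmem).2
  have hcount : ∀ e ∈ S, m.count e = 1 + if e = f e then 1 else 0 := by
    intro e he
    have h := count_cross (m := m) (hcrossE e he)
    rw [hAf e (hPS e he)] at h
    rw [← h, Multiset.count_cons_self, Multiset.count_singleton]
    omega
  -- edges of T crossing A e are e or f e
  have hTc : ∀ e ∈ S, ∀ t ∈ T, crossP (A e) t → t = e ∨ t = f e := by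
    intro e he t htT htc
    have : t ∈ cross m (A e) := mem_cross.mpr ⟨hTm t htT, htc⟩
    rw [hAf e (hPS e he)] at this
    rcases Multiset.mem_cons.mp this with h | h
    · exact Or.inl h
    · exact Or.inr (Multiset.mem_singleton.mp h)
  -- some T edge crosses each chosen cut
  have hTx : ∀ e ∈ S, ∃ t ∈ T, crossP (A e) t := by
    intro e he
    obtain ⟨a, b, _, haA, hbA⟩ := hcrossE e he
    obtain ⟨k₁, hk₁⟩ := hspan a
    obtain ⟨k₂, hk₂⟩ := walkLen_symm hk₁
    obtain ⟨k₃, hk₃⟩ := hspan b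
    obtain ⟨t, htT, htc⟩ := exists_cross_of_walk (walkLen_trans hk₂ hk₃) haA hbA
    exact ⟨t, htT, htc⟩
  -- facts for e ∈ S \ T
  have hout : ∀ e ∈ S, e ∉ T → f e ∈ T ∧ f e ≠ e ∧ m.count e = 1 ∧ m.count (f e) = 1 ∧
      (∀ s ∈ T, crossP (A e) s → s = f e) := by
    intro e heS heT
    obtain ⟨t, htT, htc⟩ := hTx e heS
    have htef := hTc e heS t htT htc
    have hfT : f e ∈ T := by
      rcases htef with rfl | rfl
      · exact absurd htT heT
      · exact htT
    have hfe : f e ≠ e := fun h => heT (h ▸ hfT)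
    have honly : ∀ s ∈ T, crossP (A e) s → s = f e := by
      intro s hsT hsc
      rcases hTc e heS s hsT hsc with rfl | h
      · exact absurd hsT heT
      · exact h
    refine ⟨hfT, hfe, ?_, ?_, honly⟩
    · rw [hcount e heS]
      simp [Ne.symm hfe]
    · -- count of f e is 1
      have h := count_cross (m := m) (hcrossF e heS)
      rw [hAf e (hPS e heS)] at h
      rw [← h, Multiset.count_cons, Multiset.count_singleton]
      simp [hfe]
  -- injectivity of f on S \ T
  have hinj : Set.InjOn f ↑(S \ T) := by
    intro e₁ he₁ e₂ he₂ hfeq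
    simp only [Finset.coe_sdiff, Set.mem_diff, Finset.mem_coe] at he₁ he₂
    obtain ⟨he₁S, he₁T⟩ := he₁
    obtain ⟨he₂S, he₂T⟩ := he₂
    obtain ⟨hf₁T, hf₁e, _, _, hon₁⟩ := hout e₁ he₁S he₁T
    obtain ⟨hf₂T, hf₂e, _, _, hon₂⟩ := hout e₂ he₂S he₂T
    have hcr : cross m (A e₂) = cross m (A e₁) := by
      refine cut_unique v₀ hspan (t := f e₁) ?_ ?_ ?_ ?_ m
      · intro s hs hsc; exact hon₁ s hs hsc
      · intro s hs hsc; rw [hfeq] at *; exact hon₂ s hs hsc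
      · exact hcrossF e₁ he₁S
      · rw [hfeq] at *; exact hcrossF e₂ he₂S
    rw [hAf e₁ (hPS e₁ he₁S), hAf e₂ (hPS e₂ he₂S), hfeq] at hcr
    -- e₂ ::ₘ {f e₂} = e₁ ::ₘ {f e₂}  ⇒  e₁ = e₂
    have : e₁ ∈ e₂ ::ₘ ({f e₂} : Multiset (Sym2 V)) := by
      rw [hcr]; exact Multiset.mem_cons_self _ _
    rcases Multiset.mem_cons.mp this with h | h
    · exact h
    · rw [Multiset.mem_singleton] at h
      rw [← hfeq] at h
      exact absurd h (Ne.symm hf₁e)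
  -- the image W of S \ T under f
  set W := (S \ T).image f with hW
  have hWT : W ⊆ T := by
    intro t ht
    rw [hW, Finset.mem_image] at ht
    obtain ⟨e, he, rfl⟩ := ht
    rw [Finset.mem_sdiff] at he
    exact (hout e he.1 he.2).1
  have hWcard : W.card = (S \ T).card := Finset.card_image_of_injOn hinj
  -- counts on W are 1
  have hWone : ∀ t ∈ W, m.count t = 1 := by
    intro t ht
    rw [hW, Finset.mem_image] at ht
    obtain ⟨e, he, rfl⟩ := ht
    rw [Finset.mem_sdiff] at he
    exact (hout e he.1 he.2).2.2.2.1
  -- now the counting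
  have hMcount : ∀ e ∈ S, M.count e = m.count e := by
    intro e he
    rw [hM, Multiset.count_filter, if_pos (hPS e he)]
  have hsum : Multiset.card M = ∑ e ∈ S, m.count e := by
    rw [hS, ← Multiset.toFinset_sum_count_eq M]
    exact Finset.sum_congr rfl hMcount
  rw [hsum]
  have hsplit : ∑ e ∈ S, m.count e = ∑ e ∈ S ∩ T, m.count e + ∑ e ∈ S \ T, m.count e :=
    (Finset.sum_inter_add_sum_sdiff S T _).symm
  have hdiff : ∑ e ∈ S \ T, m.count e = (S \ T).card := by
    rw [Finset.card_eq_sum_ones]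
    refine Finset.sum_congr rfl ?_
    intro e he
    rw [Finset.mem_sdiff] at he
    exact (hout e he.1 he.2).2.2.1
  have hsplit2 : ∑ e ∈ S ∩ T, m.count e
      = ∑ e ∈ (S ∩ T) ∩ W, m.count e + ∑ e ∈ (S ∩ T) \ W, m.count e :=
    (Finset.sum_inter_add_sum_sdiff (S ∩ T) W _).symm
  have hb1 : ∑ e ∈ (S ∩ T) ∩ W, m.count e ≤ W.card := by
    calc ∑ e ∈ (S ∩ T) ∩ W, m.count e = ∑ e ∈ (S ∩ T) ∩ W, 1 := by
          refine Finset.sum_congr rfl ?_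
          intro e he
          exact hWone e (Finset.mem_inter.mp he).2
      _ = ((S ∩ T) ∩ W).card := by rw [Finset.sum_const, smul_eq_mul, mul_one]
      _ ≤ W.card := Finset.card_le_card (Finset.inter_subset_right)
  have hb2 : ∑ e ∈ (S ∩ T) \ W, m.count e ≤ 2 * (T \ W).card := by
    calc ∑ e ∈ (S ∩ T) \ W, m.count e ≤ ∑ _e ∈ (S ∩ T) \ W, 2 := by
          refine Finset.sum_le_sum ?_
          intro e he
          rw [Finset.mem_sdiff, Finset.mem_inter] at he
          rw [hcount e he.1.1]
          split <;> omega
      _ = ((S ∩ T) \ W).card * 2 := by rw [Finset.sum_const, smul_eq_mul]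
      _ ≤ (T \ W).card * 2 := by
          have : (S ∩ T) \ W ⊆ T \ W :=
            Finset.sdiff_subset_sdiff Finset.inter_subset_right (le_refl W)
          exact Nat.mul_le_mul_right 2 (Finset.card_le_card this)
      _ = 2 * (T \ W).card := by ring
  have hTW : (T \ W).card + W.card = T.card := Finset.card_sdiff_add_card_eq_card hWT
  have hcardV : 1 ≤ Fintype.card V := Fintype.card_pos_iff.mpr ⟨v₀⟩
  omega

/-- Any 2-edge-connected multigraph on `n` vertices has at most `2 * (n - 1)`
edges that are 2-cut-edges. -/
theorem twoCutCount_le {V : Type*} [DecidableEq V] [Fintype V] {n : ℕ}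
    (hn : Fintype.card V = n) (m : Multiset (Sym2 V)) (h2ec : TwoEdgeConnected m) :
    twoCutCount m ≤ 2 * (n - 1) := by
  subst hn
  unfold twoCutCount
  exact twoCutCount_aux m h2ec _
end

section
/- The bound 2(n-1) on the number of 2-cut-edges is tight: the multigraph on n vertices consisting of a path v_1,...,v_n where each consecutive pair v_i, v_{i+1} is joined by exactly two parallel edges is 2-edge-connected and all of its 2(n-1) edges are 2-cut-edges. -/
open scoped BigOperators ENNReal

/-- The path on `n` vertices in which each consecutive pair is joined by two parallel
edges. -/
def doubledPath (n : ℕ) : Multiset (Sym2 (Fin n)) :=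
  2 • ((Finset.univ : Finset (Fin (n - 1))).val.map
    (fun i => s((⟨i.1, by have := i.isLt; omega⟩ : Fin n),
                (⟨i.1 + 1, by have := i.isLt; omega⟩ : Fin n))))

section Aux

variable {V : Type*}

lemma walkLen_trans {r : V → V → Prop} :
    ∀ {a b : ℕ} {u w v : V}, walkLen r a u w → walkLen r b w v → walkLen r (a + b) u v := by
  intro a
  induction a with
  | zero =>
    intro b u w v h1 h2
    have : u = w := h1
    subst this
    rw [Nat.zero_add]
    exact h2
  | succ k ih =>
    intro b u w v h1 h2
    obtain ⟨x, hx, hw⟩ := h1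
    have he : k + 1 + b = (k + b) + 1 := by omega
    rw [he]
    exact ⟨x, hx, ih hw h2⟩

lemma walkLen_snoc {r : V → V → Prop} :
    ∀ {k : ℕ} {u w v : V}, walkLen r k u w → r w v → walkLen r (k + 1) u v := by
  intro k
  induction k with
  | zero =>
    intro u w v h1 h2
    have : u = w := h1
    subst this
    exact ⟨v, h2, rfl⟩
  | succ t ih =>
    intro u w v h1 h2
    obtain ⟨x, hx, hw⟩ := h1
    exact ⟨x, hx, ih hw h2⟩

lemma walkLen_symm {r : V → V → Prop} (hr : ∀ u v, r u v → r v u) :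
    ∀ {k : ℕ} {u v : V}, walkLen r k u v → walkLen r k v u := by
  intro k
  induction k with
  | zero => intro u v h; exact (show u = v from h).symm
  | succ t ih =>
    intro u v h
    obtain ⟨x, hx, hw⟩ := h
    exact walkLen_snoc (ih hw) (hr _ _ hx)

lemma mAdj_symm {m : Multiset (Sym2 V)} {u v : V} (h : mAdj m u v) : mAdj m v u := by
  rwa [mAdj, Sym2.eq_swap] at h

end Aux

/-- The `i`-th edge of the doubled path. -/
def dpEdge (n : ℕ) (i : Fin (n - 1)) : Sym2 (Fin n) :=
  s((⟨i.1, by have := i.isLt; omega⟩ : Fin n), (⟨i.1 + 1, by have := i.isLt; omega⟩ : Fin n))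

lemma dpEdge_inj (n : ℕ) : Function.Injective (dpEdge n) := by
  intro a b h
  simp only [dpEdge, Sym2.eq, Sym2.rel_iff', Prod.mk.injEq, Prod.swap_prod_mk,
    Fin.mk.injEq] at h
  exact Fin.ext (by omega)

lemma doubledPath_eq (n : ℕ) :
    doubledPath n = 2 • ((Finset.univ : Finset (Fin (n - 1))).val.map (dpEdge n)) := rfl

lemma count_doubledPath (n : ℕ) (i : Fin (n - 1)) :
    Multiset.count (dpEdge n i) (doubledPath n) = 2 := by
  rw [doubledPath_eq, Multiset.count_nsmul,
    Multiset.count_map_eq_count' _ _ (dpEdge_inj n)]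
  simp

lemma mem_doubledPath {n : ℕ} {e : Sym2 (Fin n)} :
    e ∈ doubledPath n ↔ ∃ i : Fin (n - 1), e = dpEdge n i := by
  rw [doubledPath_eq, Multiset.mem_nsmul, Multiset.mem_map]
  constructor
  · rintro ⟨-, i, -, h⟩; exact ⟨i, h.symm⟩
  · rintro ⟨i, h⟩; exact ⟨by norm_num, i, by simp, h.symm⟩

lemma connected_of_adj {n : ℕ} (m : Multiset (Sym2 (Fin n)))
    (hadj : ∀ j : ℕ, ∀ h : j + 1 < n, mAdj m ⟨j, by omega⟩ ⟨j + 1, h⟩) :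
    mConnected m := by
  have hsym : ∀ u v : Fin n, mAdj m u v → mAdj m v u := fun u v h => mAdj_symm h
  have key : ∀ k : ℕ, ∀ u v : Fin n, u.1 + k = v.1 → walkLen (mAdj m) k u v := by
    intro k
    induction k with
    | zero =>
      intro u v h
      exact Fin.ext (by omega)
    | succ t ih =>
      intro u v h
      have h1 : u.1 + 1 < n := by have := v.isLt; omega
      refine ⟨⟨u.1 + 1, h1⟩, ?_, ih _ _ (by simp; omega)⟩
      exact hadj u.1 h1
  intro u v
  rcases le_total u.1 v.1 with h | h
  · exact ⟨v.1 - u.1, key _ u v (by omega)⟩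
  · exact ⟨u.1 - v.1, walkLen_symm hsym (key _ v u (by omega))⟩

lemma mem_of_count_two_erase {α : Type*} [DecidableEq α] {s : Multiset α} {a b : α}
    (h : 2 ≤ s.count a) : a ∈ s.erase b := by
  rw [← Multiset.count_pos]
  by_cases hab : a = b
  · subst hab; rw [Multiset.count_erase_self]; omega
  · rw [Multiset.count_erase_of_ne hab]; omega

lemma not_connected_doubledPath {n : ℕ} (i : Fin (n - 1)) :
    ¬ mConnected (((doubledPath n).erase (dpEdge n i)).erase (dpEdge n i)) := by
  set m2 := ((doubledPath n).erase (dpEdge n i)).erase (dpEdge n i) with hm2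
  have hcount : Multiset.count (dpEdge n i) m2 = 0 := by
    rw [hm2, Multiset.count_erase_self, Multiset.count_erase_self, count_doubledPath]
  have hstep : ∀ u v : Fin n, mAdj m2 u v → (u.1 ≤ i.1 ↔ v.1 ≤ i.1) := by
    intro u v h
    have hmem : s(u, v) ∈ doubledPath n :=
      Multiset.mem_of_le (le_trans (Multiset.erase_le _ _) (Multiset.erase_le _ _)) h
    obtain ⟨j, hj⟩ := mem_doubledPath.mp hmem
    have hji : j ≠ i := by
      rintro rfl
      rw [mAdj, hj, ← Multiset.count_pos, hcount] at h
      omega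
    have hji' : j.1 ≠ i.1 := fun hc => hji (Fin.ext hc)
    rw [dpEdge] at hj
    simp only [Sym2.eq, Sym2.rel_iff', Prod.mk.injEq, Prod.swap_prod_mk] at hj
    rcases hj with ⟨h1, h2⟩ | ⟨h1, h2⟩ <;>
    · have e1 := congrArg Fin.val h1
      have e2 := congrArg Fin.val h2
      simp only at e1 e2
      omega
  have hinv : ∀ k : ℕ, ∀ u v : Fin n, walkLen (mAdj m2) k u v → (u.1 ≤ i.1 ↔ v.1 ≤ i.1) := by
    intro k
    induction k with
    | zero => intro u v h; rw [show u = v from h]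
    | succ t ih =>
      intro u v h
      obtain ⟨x, hx, hw⟩ := h
      exact (hstep u x hx).trans (ih x v hw)
  intro hc
  have hlt := i.isLt
  obtain ⟨k, hw⟩ := hc ⟨i.1, by omega⟩ ⟨i.1 + 1, by omega⟩
  have := hinv k _ _ hw
  simp only at this
  omega

/-- Tightness of the `2(n-1)` bound: the doubled path on `n ≥ 2` vertices has `2(n-1)`
edges, is 2-edge-connected, and every one of its edges is a 2-cut-edge. -/
theorem doubledPath_all_twoCut (n : ℕ) (hn : 2 ≤ n) :
    Multiset.card (doubledPath n) = 2 * (n - 1) ∧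
    TwoEdgeConnected (doubledPath n) ∧
    (∀ e ∈ doubledPath n, IsTwoCutEdge (doubledPath n) e) ∧
    twoCutCount (doubledPath n) = 2 * (n - 1) := by
  have hcard : Multiset.card (doubledPath n) = 2 * (n - 1) := by
    rw [doubledPath_eq, Multiset.card_nsmul, Multiset.card_map]
    simp
  have hadj : ∀ j : ℕ, ∀ h : j + 1 < n, mAdj (doubledPath n) ⟨j, by omega⟩ ⟨j + 1, h⟩ := by
    intro j h
    rw [mAdj, mem_doubledPath]
    exact ⟨⟨j, by omega⟩, rfl⟩
  have hconn : mConnected (doubledPath n) := connected_of_adj _ hadj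
  have hadj_erase : ∀ e, mConnected ((doubledPath n).erase e) := by
    intro e
    apply connected_of_adj
    intro j h
    rw [mAdj, ← Multiset.count_pos]
    have : s((⟨j, by omega⟩ : Fin n), (⟨j + 1, h⟩ : Fin n)) = dpEdge n ⟨j, by omega⟩ := rfl
    rw [this]
    have h2 := count_doubledPath n ⟨j, by omega⟩
    by_cases hab : dpEdge n ⟨j, by omega⟩ = e
    · rw [← hab, Multiset.count_erase_self]; omega
    · rw [Multiset.count_erase_of_ne hab]; omega
  have htwocut : ∀ e ∈ doubledPath n, IsTwoCutEdge (doubledPath n) e := by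
    intro e he
    refine ⟨he, e, ?_, ?_⟩
    · obtain ⟨i, rfl⟩ := mem_doubledPath.mp he
      exact mem_of_count_two_erase (by rw [count_doubledPath])
    · obtain ⟨i, rfl⟩ := mem_doubledPath.mp he
      exact not_connected_doubledPath i
  refine ⟨hcard, ⟨hconn, fun e _ => hadj_erase e⟩, htwocut, ?_⟩
  classical
  rw [twoCutCount, Multiset.filter_eq_self.mpr htwocut, hcard]
end

section
/- In the doubled clique DG_n on n vertices (every pair joined by two parallel edges, m = n(n-1) edges total), a vertex that deletes k of its incident edges (1 ≤ k ≤ n-1, at most one per neighbor) has expected distance cost (n-1) + k/(n(n-1)-k) in the resulting multigraph, which is at least (n-1) + 1/(n(n-1)-1). Hence if edge price α ≤ 1/(n(n-1)-1), no vertex can profit by deleting edges it owns. -/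
open scoped BigOperators ENNReal

/-- Hop-count distance (possibly infinite) in a multigraph. -/
noncomputable def medist {V : Type*} (m : Multiset (Sym2 V)) (u v : V) : ℕ∞ :=
  sInf ((fun n : ℕ => (n : ℕ∞)) '' {n | walkLen (mAdj m) n u v})

/-- Expected distance cost of vertex `u` under uniform random deletion of one edge. -/
noncomputable def vCost {V : Type*} [DecidableEq V] [Fintype V]
    (m : Multiset (Sym2 V)) (u : V) : ℝ :=
  (Multiset.card m : ℝ)⁻¹ *
    (m.map (fun e => ∑ v : V, ((medist (m.erase e) u v).toNat : ℝ))).sum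

/-- Total expected distance cost of a multigraph. -/
noncomputable def tCost {V : Type*} [DecidableEq V] [Fintype V]
    (m : Multiset (Sym2 V)) : ℝ := ∑ u : V, vCost m u

/-! Deleting an edge that leaves `u` adjacent to every other vertex gives `u` the distance
sum `n - 1`. Deleting one of the `k` single edges `s(u, v₀)` moves `v₀` to distance `2`, via
any third vertex `w`, because the edges `s(u, w)` and `s(w, v₀)` survive. Averaging over the
`|m| = n(n - 1) - k` edges gives the cost `(n - 1) + k / (n(n - 1) - k)`. -/

section Distance

variable {V : Type*} {m : Multiset (Sym2 V)} {u v w : V}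

lemma medist_le_of_walkLen {j : ℕ} (h : walkLen (mAdj m) j u v) : medist m u v ≤ j :=
  sInf_le ⟨j, h, rfl⟩

lemma le_medist {d : ℕ∞} (h : ∀ j, walkLen (mAdj m) j u v → d ≤ j) : d ≤ medist m u v :=
  le_sInf <| by rintro _ ⟨j, hj, rfl⟩; exact h j hj

lemma medist_self (m : Multiset (Sym2 V)) (u : V) : medist m u u = 0 :=
  nonpos_iff_eq_zero.mp (medist_le_of_walkLen (j := 0) rfl)

lemma medist_eq_one (huv : u ≠ v) (hadj : s(u, v) ∈ m) : medist m u v = 1 := by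
  refine le_antisymm (medist_le_of_walkLen (j := 1) ⟨v, hadj, rfl⟩) (le_medist fun j hj => ?_)
  rcases j with _ | j
  · exact absurd hj huv
  · exact_mod_cast j.succ_pos

lemma medist_eq_two (huv : u ≠ v) (hnadj : s(u, v) ∉ m) (huw : s(u, w) ∈ m)
    (hwv : s(w, v) ∈ m) : medist m u v = 2 := by
  refine le_antisymm (medist_le_of_walkLen (j := 2) ⟨w, huw, v, hwv, rfl⟩)
    (le_medist fun j hj => ?_)
  match j, hj with
  | 0, hj => exact absurd hj huv
  | 1, ⟨_, hadj, rfl⟩ => exact absurd hadj hnadj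
  | j + 2, _ => exact_mod_cast Nat.le_add_left 2 j

lemma injective_mk_left (u : V) : Function.Injective (fun v => s(u, v)) :=
  fun _ _ h => Sym2.congr_right.mp h

end Distance

lemma Multiset.sum_map_ite_mem_eq_card {α R : Type*} [DecidableEq α] [AddCommMonoidWithOne R]
    {m : Multiset α} {D : Finset α} (hD : ∀ p ∈ D, m.count p = 1) :
    (m.map fun e => if e ∈ D then (1 : R) else 0).sum = D.card := by
  have hfilter : m.filter (· ∈ D) = D.val := by
    ext p
    rw [Multiset.count_filter, Multiset.count_eq_of_nodup D.nodup]
    by_cases hp : p ∈ D <;> simp [hp, hD]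
  rw [← Multiset.filter_add_not (· ∈ D) m, Multiset.map_add, Multiset.sum_add,
    Multiset.map_congr rfl fun e he => if_pos (Multiset.of_mem_filter he),
    Multiset.map_congr rfl fun e he => if_neg (Multiset.mem_filter.mp he).2]
  simp [hfilter]

section Star

variable {V : Type*} [Fintype V] {m : Multiset (Sym2 V)} {u v₀ : V}

lemma card_pos_of_forall_adj (hV : 1 < Fintype.card V) (hstar : ∀ v, v ≠ u → s(u, v) ∈ m) :
    0 < Multiset.card m :=
  let ⟨v, hvu⟩ := Fintype.exists_ne_of_one_lt_card hV u
  Multiset.card_pos_iff_exists_mem.mpr ⟨_, hstar v hvu⟩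

variable [DecidableEq V]

lemma sum_ite_eq_zero_else_one (u : V) :
    ∑ v : V, (if v = u then 0 else 1) = Fintype.card V - 1 := by
  simp [Finset.sum_ite, Finset.filter_ne', Finset.card_erase_of_mem]

lemma sum_medist_of_forall_adj (hadj : ∀ v, v ≠ u → s(u, v) ∈ m) :
    ∑ v, (medist m u v).toNat = Fintype.card V - 1 := by
  have hd : ∀ v, (medist m u v).toNat = if v = u then 0 else 1 := by
    intro v
    split_ifs with hvu
    · simp [hvu, medist_self]
    · simp [medist_eq_one (Ne.symm hvu) (hadj v hvu)]
  simp only [hd, sum_ite_eq_zero_else_one]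

lemma sum_medist_of_forall_adj_but (hv₀ : v₀ ≠ u) (hnadj : s(u, v₀) ∉ m)
    (hadj : ∀ v, v ≠ u → v ≠ v₀ → s(u, v) ∈ m) {w : V} (hwu : w ≠ u) (hwv₀ : w ≠ v₀)
    (hwv : s(w, v₀) ∈ m) :
    ∑ v, (medist m u v).toNat = Fintype.card V := by
  have hd : ∀ v, (medist m u v).toNat = (if v = u then 0 else 1) + if v = v₀ then 1 else 0 := by
    intro v
    by_cases hvu : v = u
    · simp [hvu, medist_self, hv₀.symm]
    by_cases hvv₀ : v = v₀
    · subst hvv₀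
      simp [hvu, medist_eq_two (Ne.symm hvu) hnadj (hadj w hwu hwv₀) hwv]
    · simp [hvu, hvv₀, medist_eq_one (Ne.symm hvu) (hadj v hvu hvv₀)]
  have : 0 < Fintype.card V := Fintype.card_pos_iff.mpr ⟨u⟩
  simp only [hd, Finset.sum_add_distrib, sum_ite_eq_zero_else_one, Finset.sum_ite_eq',
    Finset.mem_univ, if_true]
  omega

lemma exists_ne_ne_of_two_lt_card (hV : 2 < Fintype.card V) (a b : V) :
    ∃ w, w ≠ a ∧ w ≠ b := by
  have : 1 < (Finset.univ.erase a).card := by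
    rw [Finset.card_erase_of_mem (Finset.mem_univ a), Finset.card_univ]; omega
  obtain ⟨w, hw, hwb⟩ := Finset.exists_mem_ne this b
  exact ⟨w, Finset.ne_of_mem_erase hw, hwb⟩

def singleNeighbors (m : Multiset (Sym2 V)) (u : V) : Finset V :=
  {v | v ≠ u ∧ m.count s(u, v) = 1}

def singleEdges (m : Multiset (Sym2 V)) (u : V) : Finset (Sym2 V) :=
  (singleNeighbors m u).image (s(u, ·))

lemma card_singleEdges : (singleEdges m u).card = (singleNeighbors m u).card :=
  Finset.card_image_of_injective _ (injective_mk_left u)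

lemma sum_medist_erase_mem_singleEdges (hV : 2 < Fintype.card V)
    (hstar : ∀ v, v ≠ u → s(u, v) ∈ m)
    (hrest : ∀ v w, v ≠ u → w ≠ u → v ≠ w → s(v, w) ∈ m) (hv₀ : v₀ ∈ singleNeighbors m u) :
    ∑ v, (medist (m.erase s(u, v₀)) u v).toNat = Fintype.card V := by
  simp only [singleNeighbors, Finset.mem_filter, Finset.mem_univ, true_and] at hv₀
  obtain ⟨hv₀u, hcount⟩ := hv₀
  obtain ⟨w, hwu, hwv₀⟩ := exists_ne_ne_of_two_lt_card hV u v₀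
  refine sum_medist_of_forall_adj_but hv₀u ?_ (fun v hvu hvv₀ => ?_) hwu hwv₀ ?_
  · rw [← Multiset.count_pos, Multiset.count_erase_self, hcount]; simp
  · exact (Multiset.mem_erase_of_ne (mt Sym2.congr_right.mp hvv₀)).mpr (hstar v hvu)
  · exact (Multiset.mem_erase_of_ne (mt Sym2.congr_left.mp hwu)).mpr (hrest w v₀ hwu hv₀u hwv₀)

lemma sum_medist_erase_not_mem_singleEdges (hstar : ∀ v, v ≠ u → s(u, v) ∈ m) {e : Sym2 V}
    (he : e ∈ m) (heD : e ∉ singleEdges m u) :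
    ∑ v, (medist (m.erase e) u v).toNat = Fintype.card V - 1 := by
  refine sum_medist_of_forall_adj fun v hvu => ?_
  rcases eq_or_ne s(u, v) e with rfl | hne
  · have hv : v ∉ singleNeighbors m u := fun hv => heD (Finset.mem_image_of_mem _ hv)
    have h1 : m.count s(u, v) ≠ 1 := by simpa [singleNeighbors, hvu] using hv
    have h0 : m.count s(u, v) ≠ 0 := Multiset.count_ne_zero.mpr he
    rw [← Multiset.count_pos, Multiset.count_erase_self]
    omega
  · exact (Multiset.mem_erase_of_ne hne).mpr (hstar v hvu)

lemma sum_medist_erase_eq (hV : 2 < Fintype.card V) (hstar : ∀ v, v ≠ u → s(u, v) ∈ m)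
    (hrest : ∀ v w, v ≠ u → w ≠ u → v ≠ w → s(v, w) ∈ m) {e : Sym2 V} (he : e ∈ m) :
    ∑ v, ((medist (m.erase e) u v).toNat : ℝ) =
      (Fintype.card V - 1 : ℝ) + if e ∈ singleEdges m u then 1 else 0 := by
  rw [← Nat.cast_sum]
  split_ifs with heD
  · obtain ⟨v₀, hv₀, rfl⟩ := Finset.mem_image.mp heD
    rw [sum_medist_erase_mem_singleEdges hV hstar hrest hv₀]
    ring
  · rw [sum_medist_erase_not_mem_singleEdges hstar he heD, Nat.cast_sub (by omega)]
    simp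

theorem vCost_eq_of_forall_adj (hV : 2 < Fintype.card V) (hstar : ∀ v, v ≠ u → s(u, v) ∈ m)
    (hrest : ∀ v w, v ≠ u → w ≠ u → v ≠ w → s(v, w) ∈ m) :
    vCost m u = (Fintype.card V - 1 : ℝ) + (singleNeighbors m u).card / Multiset.card m := by
  have hm : (Multiset.card m : ℝ) ≠ 0 := by
    exact_mod_cast (card_pos_of_forall_adj (by omega) hstar).ne'
  have hsingle : ∀ p ∈ singleEdges m u, m.count p = 1 := by
    simp only [singleEdges, singleNeighbors, Finset.mem_image, Finset.mem_filter]
    rintro _ ⟨v, ⟨-, -, hv⟩, rfl⟩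
    exact hv
  rw [vCost, Multiset.map_congr rfl fun e he => sum_medist_erase_eq hV hstar hrest he,
    Multiset.sum_map_add, Multiset.map_const', Multiset.sum_replicate, nsmul_eq_mul,
    Multiset.sum_map_ite_mem_eq_card hsingle, card_singleEdges]
  field_simp

end Star

lemma card_add_card_eq_of_count {V : Type*} [Fintype V] [DecidableEq V]
    {m : Multiset (Sym2 V)} {D : Finset (Sym2 V)}
    (h : ∀ p, m.count p + (if p ∈ D then 1 else 0) = if p.IsDiag then 0 else 2) :
    Multiset.card m + D.card = Fintype.card V * (Fintype.card V - 1) := by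
  have hnondiag : (Finset.univ.filter fun p : Sym2 V => ¬p.IsDiag).card =
      (Fintype.card V).choose 2 := by
    rw [← Fintype.card_subtype, Sym2.card_subtype_not_diag]
  calc Multiset.card m + D.card = ∑ p, (m.count p + if p ∈ D then 1 else 0) := by
        rw [Finset.sum_add_distrib, Multiset.sum_count_eq_card fun p _ => Finset.mem_univ p,
          Finset.sum_ite_mem, Finset.univ_inter, Finset.sum_const, smul_eq_mul, mul_one]
    _ = ∑ p, if p.IsDiag then 0 else 2 := Finset.sum_congr rfl fun p _ => h p
    _ = 2 * (Fintype.card V).choose 2 := by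
        rw [Finset.sum_ite, Finset.sum_const_zero, Finset.sum_const, hnondiag, smul_eq_mul,
          zero_add, mul_comm]
    _ = Fintype.card V * (Fintype.card V - 1) := by
        rw [Nat.choose_two_right, Nat.mul_div_cancel' (Nat.even_mul_pred_self _).two_dvd]

section DeletedDoubledClique

variable {V : Type*} [DecidableEq V] {u : V} {S : Finset V} {m : Multiset (Sym2 V)}

lemma count_add_ite_mem_image_eq (huS : u ∉ S)
    (hdiag : ∀ p : Sym2 V, p.IsDiag → m.count p = 0)
    (hsingle : ∀ v ∈ S, m.count s(u, v) = 1)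
    (hdouble : ∀ v : V, v ≠ u → v ∉ S → m.count s(u, v) = 2)
    (hrest : ∀ v w : V, v ≠ u → w ≠ u → v ≠ w → m.count s(v, w) = 2) (p : Sym2 V) :
    m.count p + (if p ∈ S.image (s(u, ·)) then 1 else 0) = if p.IsDiag then 0 else 2 := by
  have hmem_image : ∀ w, s(u, w) ∈ S.image (s(u, ·)) ↔ w ∈ S :=
    fun w => (injective_mk_left u).mem_finset_image
  have hnot_mem : ∀ v w, v ≠ u → w ≠ u → s(v, w) ∉ S.image (s(u, ·)) := by
    rintro v w hv hw h
    obtain ⟨a, -, ha⟩ := Finset.mem_image.mp h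
    rcases Sym2.eq_iff.mp ha with ⟨h, -⟩ | ⟨h, -⟩
    exacts [hv h.symm, hw h.symm]
  have hpair : ∀ w, w ≠ u →
      m.count s(u, w) + (if s(u, w) ∈ S.image (s(u, ·)) then 1 else 0) = 2 := by
    intro w hw
    by_cases hwS : w ∈ S
    · simp [hmem_image, hwS, hsingle]
    · simp [hmem_image, hwS, hdouble w hw hwS]
  induction p using Sym2.inductionOn with | hf v w => ?_
  rcases eq_or_ne v w with rfl | hvw
  · rw [if_pos (Sym2.mk_isDiag_iff.mpr rfl), hdiag _ (Sym2.mk_isDiag_iff.mpr rfl)]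
    rcases eq_or_ne v u with rfl | hv
    · simp [hmem_image, huS]
    · simp [hnot_mem v v hv hv]
  rw [if_neg (Sym2.mk_isDiag_iff.not.mpr hvw)]
  by_cases hv : v = u
  · subst hv
    exact hpair w hvw.symm
  by_cases hw : w = u
  · subst hw
    rw [Sym2.eq_swap]
    exact hpair v hvw
  rw [hrest v w hv hw hvw, if_neg (hnot_mem v w hv hw)]

lemma singleNeighbors_eq [Fintype V] (huS : u ∉ S) (hsingle : ∀ v ∈ S, m.count s(u, v) = 1)
    (hdouble : ∀ v : V, v ≠ u → v ∉ S → m.count s(u, v) = 2) :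
    singleNeighbors m u = S := by
  ext v
  simp only [singleNeighbors, Finset.mem_filter, Finset.mem_univ, true_and]
  refine ⟨fun ⟨hvu, hv⟩ => ?_, fun hv => ⟨fun h => huS (h ▸ hv), hsingle v hv⟩⟩
  by_contra hvS
  rw [hdouble v hvu hvS] at hv
  omega

end DeletedDoubledClique

lemma one_div_sub_one_le_div_sub {M k : ℝ} (hk : 1 ≤ k) (hkM : k < M) :
    1 / (M - 1) ≤ k / (M - k) := by
  rw [div_le_div_iff₀ (by linarith) (by linarith)]
  nlinarith

lemma mul_le_div_sub_of_le_one_div_sub_one {M k α : ℝ} (hk : 1 ≤ k) (hkM : k < M)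
    (hα : α ≤ 1 / (M - 1)) : α * k ≤ k / (M - k) :=
  calc α * k ≤ 1 / (M - k) * k := by
        gcongr
        exact hα.trans (one_div_le_one_div_of_le (by linarith) (by linarith))
    _ = k / (M - k) := one_div_mul_eq_div _ _

theorem vCost_DGn_after_deletions_general {n k : ℕ} (hn : 3 ≤ n) (u : Fin n)
    (S : Finset (Fin n)) (huS : u ∉ S) (hScard : S.card = k)
    (hk1 : 1 ≤ k)
    (m : Multiset (Sym2 (Fin n)))
    (hdiag : ∀ p : Sym2 (Fin n), p.IsDiag → m.count p = 0)
    (hsingle : ∀ v ∈ S, m.count s(u, v) = 1)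
    (hdouble : ∀ v : Fin n, v ≠ u → v ∉ S → m.count s(u, v) = 2)
    (hrest : ∀ v w : Fin n, v ≠ u → w ≠ u → v ≠ w → m.count s(v, w) = 2) :
    vCost m u = (n - 1 : ℝ) + (k : ℝ) / ((n * (n - 1) : ℕ) - (k : ℝ)) ∧
    (n - 1 : ℝ) + 1 / ((n * (n - 1) : ℕ) - (1 : ℝ)) ≤ vCost m u ∧
    (∀ α : ℝ, 0 ≤ α → α ≤ 1 / ((n * (n - 1) : ℕ) - (1 : ℝ)) →
      α * k ≤ (k : ℝ) / ((n * (n - 1) : ℕ) - (k : ℝ))) := by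
  have hV : 2 < Fintype.card (Fin n) := by rw [Fintype.card_fin]; omega
  have hstar : ∀ v, v ≠ u → s(u, v) ∈ m := fun v hv => Multiset.count_pos.mp <| by
    by_cases hvS : v ∈ S
    · simp [hsingle v hvS]
    · simp [hdouble v hv hvS]
  have hcost := vCost_eq_of_forall_adj hV hstar fun v w hv hw hvw =>
    Multiset.count_pos.mp (by simp [hrest v w hv hw hvw])
  have hcard := card_add_card_eq_of_count
    (count_add_ite_mem_image_eq huS hdiag hsingle hdouble hrest)
  rw [Finset.card_image_of_injective _ (injective_mk_left u), hScard, Fintype.card_fin] at hcard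
  have hM : ((n * (n - 1) : ℕ) : ℝ) - k = Multiset.card m := by
    rw [← hcard]; push_cast; ring
  have hkM : (k : ℝ) < (n * (n - 1) : ℕ) := by
    rw [← sub_pos, hM]
    exact_mod_cast card_pos_of_forall_adj (by omega) hstar
  rw [singleNeighbors_eq huS hsingle hdouble, hScard, Fintype.card_fin, ← hM] at hcost
  have hk : (1 : ℝ) ≤ k := by exact_mod_cast hk1
  exact ⟨hcost, hcost ▸ add_le_add_right (one_div_sub_one_le_div_sub hk hkM) _,
    fun α _ hα => mul_le_div_sub_of_le_one_div_sub_one hk hkM hα⟩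

/-- In the doubled clique `DG_n` (`n ≥ 3`) where a vertex `u` has deleted `k` of its
incident edges (`1 ≤ k ≤ n - 1`, at most one per neighbor, so `u` has single edges to the
`k` neighbors in `S` and double edges to all others, and all other pairs are doubled),
the expected distance cost of `u` is `(n-1) + k/(n(n-1)-k)`, which is at least
`(n-1) + 1/(n(n-1)-1)`; hence if `0 ≤ α ≤ 1/(n(n-1)-1)`, the edge-cost saving `α·k` does
not exceed the increase `k/(n(n-1)-k)` in expected distance cost. -/
theorem vCost_DGn_after_deletions {n k : ℕ} (hn : 3 ≤ n) (u : Fin n)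
    (S : Finset (Fin n)) (huS : u ∉ S) (hScard : S.card = k)
    (hk1 : 1 ≤ k) (hk2 : k ≤ n - 1)
    (m : Multiset (Sym2 (Fin n)))
    (hdiag : ∀ p : Sym2 (Fin n), p.IsDiag → m.count p = 0)
    (hsingle : ∀ v ∈ S, m.count s(u, v) = 1)
    (hdouble : ∀ v : Fin n, v ≠ u → v ∉ S → m.count s(u, v) = 2)
    (hrest : ∀ v w : Fin n, v ≠ u → w ≠ u → v ≠ w → m.count s(v, w) = 2) :
    vCost m u = (n - 1 : ℝ) + (k : ℝ) / ((n * (n - 1) : ℕ) - (k : ℝ)) ∧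
    (n - 1 : ℝ) + 1 / ((n * (n - 1) : ℕ) - (1 : ℝ)) ≤ vCost m u ∧
    (∀ α : ℝ, 0 ≤ α → α ≤ 1 / ((n * (n - 1) : ℕ) - (1 : ℝ)) →
      α * k ≤ (k : ℝ) / ((n * (n - 1) : ℕ) - (k : ℝ))) :=
  vCost_DGn_after_deletions_general hn u S huS hScard hk1 m hdiag hsingle hdouble hrest
end

section
/- For edge prices α with 2n(n-1)/((binom(n,2)+k)(binom(n,2)+k+1)) ≤ α ≤ 2n(n-1)/((binom(n,2)+k)(binom(n,2)+k-1)), the social cost of DG_{n,k} is at most the social cost of both DG_{n,k-1} and DG_{n,k+1}; i.e., neither upgrading a single edge to a double edge nor downgrading a double edge to a single decreases cost(DG_{n,k}, α) = α(binom(n,2)+k) + n(n-1) + 2(binom(n,2)-k)/(binom(n,2)+k). -/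
/-- With `B = C(n,2)` and social cost `cost(DG_{n,k}, α) = α(B+k) + n(n-1) + 2(B-k)/(B+k)`,
if `2n(n-1)/((B+k)(B+k+1)) ≤ α ≤ 2n(n-1)/((B+k)(B+k-1))` for some `1 ≤ k ≤ B - 1`,
then `cost(DG_{n,k}, α)` is at most both `cost(DG_{n,k-1}, α)` and `cost(DG_{n,k+1}, α)`. -/
theorem DGnk_cost_optimal_range {n k : ℕ} (hn : 2 ≤ n)
    (hk1 : 1 ≤ k) (hk2 : k ≤ n.choose 2 - 1) (α : ℝ)
    (cost : ℕ → ℝ)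
    (hcost : ∀ j : ℕ, cost j =
      α * ((n.choose 2 : ℝ) + j) + (n : ℝ) * ((n : ℝ) - 1) +
        2 * ((n.choose 2 : ℝ) - j) / ((n.choose 2 : ℝ) + j))
    (hαl : 2 * (n : ℝ) * ((n : ℝ) - 1) /
        (((n.choose 2 : ℝ) + k) * ((n.choose 2 : ℝ) + k + 1)) ≤ α)
    (hαu : α ≤ 2 * (n : ℝ) * ((n : ℝ) - 1) /
        (((n.choose 2 : ℝ) + k) * ((n.choose 2 : ℝ) + k - 1))) :
    cost k ≤ cost (k - 1) ∧ cost k ≤ cost (k + 1) := by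
  set B : ℝ := (n.choose 2 : ℝ) with hBdef
  have hnat : n * (n - 1) = 2 * n.choose 2 := by
    rw [Nat.choose_two_right, Nat.mul_div_cancel' (Nat.even_mul_pred_self n).two_dvd]
  have h2B : (n : ℝ) * ((n : ℝ) - 1) = 2 * B := by
    have := congrArg (Nat.cast : ℕ → ℝ) hnat
    push_cast [Nat.cast_sub (by omega : 1 ≤ n)] at this
    linarith [this]
  have hB1 : (1 : ℝ) ≤ B := by
    have : 0 < n.choose 2 := Nat.choose_pos hn
    have : (1:ℕ) ≤ n.choose 2 := this
    rw [hBdef]; exact_mod_cast this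
  have hk1' : (1 : ℝ) ≤ (k : ℝ) := by exact_mod_cast hk1
  have hD0 : 0 < B + k - 1 := by linarith
  have hD1 : 0 < B + k := by linarith
  have hD2 : 0 < B + k + 1 := by linarith
  have hkm : ((k - 1 : ℕ) : ℝ) = (k : ℝ) - 1 := by
    push_cast [Nat.cast_sub hk1]; ring
  constructor
  · rw [hcost k, hcost (k - 1), hkm]
    have hid : 2 * (n : ℝ) * ((n : ℝ) - 1) / ((B + k) * (B + k - 1)) =
        2 * (B - ((k : ℝ) - 1)) / (B + ((k : ℝ) - 1)) - 2 * (B - k) / (B + k) := by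
      rw [show (2:ℝ) * (n:ℝ) * ((n:ℝ) - 1) = 4 * B by linarith,
        show B + ((k:ℝ) - 1) = B + (k:ℝ) - 1 by ring]
      field_simp
      ring
    rw [hid] at hαu
    have : B + ((k:ℝ) - 1) = B + k - 1 := by ring
    nlinarith [hαu]
  · rw [hcost k, hcost (k + 1)]
    have hid : 2 * (n : ℝ) * ((n : ℝ) - 1) / ((B + k) * (B + k + 1)) =
        2 * (B - k) / (B + k) - 2 * (B - ((k : ℝ) + 1)) / (B + ((k : ℝ) + 1)) := by
      rw [show (2:ℝ) * (n:ℝ) * ((n:ℝ) - 1) = 4 * B by linarith]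
      field_simp
      ring
    rw [hid] at hαl
    push_cast
    nlinarith [hαl]
end

section
/- If G has a dominating set D of size k, then G plus a universal vertex u has a connected 2-dominating set of size k+1, namely D ∪ {u}; conversely, from any connected 2-dominating set S of G+u of size k+1 one can obtain a dominating set of G of size k (by removing u if u ∈ S, or removing any single vertex of S otherwise). -/
/-- `D` is a dominating set of `G`: every vertex outside `D` has a neighbor in `D`. -/
def Dominating {V : Type*} (G : SimpleGraph V) (D : Finset V) : Prop :=
  ∀ v : V, v ∉ D → ∃ d ∈ D, G.Adj v d

/-- `S` is a connected 2-dominating set of `G`: the subgraph induced by `S` is connected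
and every vertex outside `S` has at least two neighbors in `S`. -/
def Connected2Dominating {V : Type*} (G : SimpleGraph V) (S : Finset V) : Prop :=
  (G.induce (S : Set V)).Connected ∧
  ∀ v : V, v ∉ S → ∃ a ∈ S, ∃ b ∈ S, a ≠ b ∧ G.Adj v a ∧ G.Adj v b

/-- `G` together with a new universal vertex `none` adjacent to every original vertex. -/
def addUniversal {V : Type*} (G : SimpleGraph V) : SimpleGraph (Option V) :=
  SimpleGraph.fromRel (fun x y =>
    x = none ∨ ∃ a b, x = some a ∧ y = some b ∧ G.Adj a b)

lemma adj_none_some {V : Type*} (G : SimpleGraph V) (a : V) :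
    (addUniversal G).Adj none (some a) := by
  simp [addUniversal, SimpleGraph.fromRel_adj]

lemma adj_some_some {V : Type*} (G : SimpleGraph V) (a b : V) :
    (addUniversal G).Adj (some a) (some b) ↔ G.Adj a b := by
  simp [addUniversal, SimpleGraph.fromRel_adj]
  constructor
  · rintro ⟨_, h | h⟩
    exacts [h, h.symm]
  · intro h
    exact ⟨by simpa using h.ne, Or.inl h⟩

lemma reachable_adj {W : Type*} {H : SimpleGraph W} {x y : W} (h : H.Reachable x y)
    (hne : x ≠ y) : ∃ z, H.Adj x z := by
  obtain ⟨w⟩ := h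
  cases w with
  | nil => exact absurd rfl hne
  | cons h _ => exact ⟨_, h⟩

/-- If `D` is a dominating set of `G` of size `k`, then `D ∪ {u}` (with `u` the added
universal vertex) is a connected 2-dominating set of `G + u` of size `k + 1`; conversely,
from any connected 2-dominating set of `G + u` of size `k + 1` one can obtain a dominating
set of `G` of size `k`. -/
theorem dominating_addUniversal_correspondence {V : Type*} [Fintype V] [DecidableEq V]
    (G : SimpleGraph V) (k : ℕ) :
    (∀ D : Finset V, Dominating G D → D.card = k →
      Connected2Dominating (addUniversal G) (insert none (D.image some)) ∧
      (insert none (D.image some)).card = k + 1) ∧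
    (∀ S : Finset (Option V), Connected2Dominating (addUniversal G) S →
      S.card = k + 1 → ∃ D : Finset V, Dominating G D ∧ D.card = k) := by
  constructor
  · intro D hD hcard
    set S : Finset (Option V) := insert none (D.image some) with hS
    have hnone : (none : Option V) ∈ S := Finset.mem_insert_self _ _
    refine ⟨⟨?_, ?_⟩, ?_⟩
    · -- connected
      have key : ∀ z : ((S : Set (Option V)) : Type _),
          ((addUniversal G).induce (S : Set (Option V))).Reachable z ⟨none, hnone⟩ := by
        rintro ⟨z, hz⟩
        match z with
        | none => rfl
        | some a =>
          refine SimpleGraph.Adj.reachable ?_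
          show (addUniversal G).Adj (some a) none
          exact (adj_none_some G a).symm
      haveI : Nonempty ((S : Set (Option V)) : Type _) := ⟨⟨none, hnone⟩⟩
      exact ⟨fun x y => (key x).trans (key y).symm⟩
    · -- 2-dominating
      intro v hv
      match v with
      | none => exact absurd hnone hv
      | some w =>
        have hw : w ∉ D := fun h => hv (Finset.mem_insert_of_mem (Finset.mem_image_of_mem _ h))
        obtain ⟨d, hd, hadj⟩ := hD w hw
        refine ⟨none, hnone, some d, Finset.mem_insert_of_mem (Finset.mem_image_of_mem _ hd),
          by simp, (adj_none_some G w).symm, (adj_some_some G w d).mpr hadj⟩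
    · -- card
      rw [Finset.card_insert_of_notMem (by simp),
        Finset.card_image_of_injective _ (Option.some_injective V)]
      omega
  · intro S hS hcard
    set D : Finset V := Finset.univ.filter (fun v => some v ∈ S) with hD
    have hmemD : ∀ v : V, v ∈ D ↔ some v ∈ S := by
      intro v; simp [hD]
    by_cases hn : (none : Option V) ∈ S
    · refine ⟨D, ?_, ?_⟩
      · intro v hv
        have hvS : some v ∉ S := fun h => hv ((hmemD v).mpr h)
        obtain ⟨a, ha, b, hb, hab, h1, h2⟩ := hS.2 (some v) hvS
        match a, b with
        | none, none => exact absurd rfl hab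
        | none, some d => exact ⟨d, (hmemD d).mpr hb, (adj_some_some G v d).mp h2⟩
        | some d, _ => exact ⟨d, (hmemD d).mpr ha, (adj_some_some G v d).mp h1⟩
      · have hSeq : S = insert none (D.image some) := by
          ext x
          match x with
          | none => simp [hn]
          | some a => simp [hmemD a]
        rw [hSeq, Finset.card_insert_of_notMem (by simp),
          Finset.card_image_of_injective _ (Option.some_injective V)] at hcard
        omega
    · -- none ∉ S : S = image some D, remove one vertex
      have hSeq : S = D.image some := by
        ext x
        match x with
        | none => simp [hn]
        | some a => simp [hmemD a]
      have hDcard : D.card = k + 1 := by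
        rw [hSeq, Finset.card_image_of_injective _ (Option.some_injective V)] at hcard
        exact hcard
      -- S has at least two elements
      obtain ⟨a, ha, b, hb, hab, -, -⟩ := hS.2 none hn
      have hk : 1 ≤ k := by
        by_contra hk
        have : D.card = 1 := by omega
        obtain ⟨x, hx⟩ := Finset.card_eq_one.mp this
        rw [hSeq, hx] at ha hb
        simp at ha hb
        exact hab (ha.trans hb.symm)
      obtain ⟨x, hx⟩ := Finset.card_pos.mp (by omega : 0 < D.card)
      refine ⟨D.erase x, ?_, by rw [Finset.card_erase_of_mem hx, hDcard]; omega⟩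
      intro v hv
      by_cases hvD : v ∈ D
      · -- then v = x; use connectivity
        have hvx : v = x := by
          by_contra h
          exact hv (Finset.mem_erase.mpr ⟨h, hvD⟩)
        subst hvx
        have hxS : some v ∈ S := (hmemD v).mp hvD
        -- find another vertex of S
        have hy : ∃ y ∈ S, y ≠ some v := by
          rcases eq_or_ne a (some v) with rfl | h
          · exact ⟨b, hb, fun h => hab h.symm⟩
          · exact ⟨a, ha, h⟩
        obtain ⟨y, hyS, hyne⟩ := hy
        obtain ⟨⟨z, hzS⟩, hadj⟩ := reachable_adj
          (hS.1.preconnected ⟨some v, hxS⟩ ⟨y, hyS⟩)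
          (fun h => hyne (congrArg Subtype.val h).symm)
        have hadj' : (addUniversal G).Adj (some v) z := hadj
        match z with
        | none => exact absurd hzS hn
        | some d =>
          have hGadj := (adj_some_some G v d).mp hadj'
          refine ⟨d, Finset.mem_erase.mpr ⟨fun h => hGadj.ne h.symm, (hmemD d).mpr hzS⟩, hGadj⟩
      · -- v ∉ D : two distinct dominators, one survives erase
        have hvS : some v ∉ S := fun h => hvD ((hmemD v).mpr h)
        obtain ⟨a', ha', b', hb', hab', h1, h2⟩ := hS.2 (some v) hvS
        match a', b' with
        | none, _ => exact absurd ha' hn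
        | _, none => exact absurd hb' hn
        | some d₁, some d₂ =>
          have hd₁ : d₁ ∈ D := (hmemD d₁).mpr ha'
          have hd₂ : d₂ ∈ D := (hmemD d₂).mpr hb'
          have hne : d₁ ≠ d₂ := fun h => hab' (congrArg some h)
          rcases eq_or_ne d₁ x with rfl | h
          · exact ⟨d₂, Finset.mem_erase.mpr ⟨hne.symm, hd₂⟩,
              (adj_some_some G v d₂).mp h2⟩
          · exact ⟨d₁, Finset.mem_erase.mpr ⟨h, hd₁⟩,
              (adj_some_some G v d₁).mp h1⟩
end
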